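/- Every finite-dimensional anti-Zinbiel algebra Z over ℂ is solvable: there exists n ∈ ℕ such that Z^(n) = {0}, where Z^(0) = Z and Z^(k+1) is the linear span of all products x*y with x, y ∈ Z^(k). -/

import Mathlib

/-- The derived series of a (non-associative) ℂ-algebra:
Z^(0) = Z and Z^(k+1) = span{x*y : x, y ∈ Z^(k)}. -/
def algDerivedSeries {Z : Type*} [AddCommGroup Z] [Module ℂ Z]
    (mul : Z →ₗ[ℂ] Z →ₗ[ℂ] Z) : ℕ → Submodule ℂ Z
  | 0 => ⊤
  | n + 1 => Submodule.span ℂ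
      {z : Z | ∃ x ∈ algDerivedSeries mul n, ∃ y ∈ algDerivedSeries mul n, z = mul x y}

/-- Every finite-dimensional anti-Zinbiel algebra over ℂ is
solvable. -/
theorem antiZinbiel_solvable
    (Z : Type*) [AddCommGroup Z] [Module ℂ Z] [FiniteDimensional ℂ Z]
    (mul : Z →ₗ[ℂ] Z →ₗ[ℂ] Z)
    (hZ : ∀ x y z : Z,
      mul x (mul y z) = -(mul (mul x y) z - mul x (mul z y))) :
    ∃ n : ℕ, algDerivedSeries mul n = ⊥ := by
  classical
  -- right-multiplication operators
  set R : Z →ₗ[ℂ] Module.End ℂ Z := mul.flip with hRdef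
  -- anticommutation relation (derived from the anti-Zinbiel identity)
  have hB : ∀ a b x : Z, mul (mul x a) b = - mul (mul x b) a := by
    intro a b x
    have h1 := hZ x a b
    have h2 := hZ x b a
    rw [h2] at h1
    have h3 : mul (mul x a) b + mul (mul x b) a = 0 := by
      linear_combination (norm := abel) h1
    exact eq_neg_of_add_eq_zero_left h3
  -- squares of right multiplications vanish
  have hsq : ∀ a : Z, R a * R a = 0 := by
    intro a
    ext x
    have := hB a a x
    have h0 : mul (mul x a) a = 0 := by
      have h2 : mul (mul x a) a + mul (mul x a) a = 0 := by
        nth_rewrite 1 [this]; abel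
      have h3 : (2 : ℂ) • mul (mul x a) a = 0 := by
        rw [two_smul]; exact h2
      simpa using (smul_eq_zero.mp h3).resolve_left (by norm_num)
    simpa [Module.End.mul_apply, hRdef] using h0
  -- spaces spanned by words of right multiplications of a given length
  let W : ℕ → Submodule ℂ Z := fun k => Submodule.span ℂ
    {z : Z | ∃ (c : Fin k → Z) (w : Z),
      z = ((List.ofFn fun i => R (c i)).prod : Module.End ℂ Z) w}
  -- multiplying a word-element on the right extends the word
  have hprep : ∀ (v : Z) (k : ℕ) (z : Z), z ∈ W k → mul z v ∈ W (k + 1) := by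
    intro v k z hz
    induction hz using Submodule.span_induction with
    | mem z hzm =>
      obtain ⟨c, w, rfl⟩ := hzm
      refine Submodule.subset_span ⟨(Fin.cons v c : Fin (k+1) → Z), w, ?_⟩
      have : (List.ofFn fun i : Fin (k+1) => R ((Fin.cons v c : Fin (k+1) → Z) i)).prod
          = R v * (List.ofFn fun i : Fin k => R (c i)).prod := by
        rw [List.ofFn_succ]
        simp [Fin.cons_zero, Fin.cons_succ]
      rw [this]
      rfl
    | zero => simp
    | add x y _ _ hx hy => rw [map_add, LinearMap.add_apply]; exact (W (k+1)).add_mem hx hy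
    | smul c x _ hx => rw [map_smul, LinearMap.smul_apply]; exact (W (k+1)).smul_mem c hx
  -- main reduction: products out of the m-th derived term are words of length m+1
  have hS : ∀ m : ℕ, ∀ u ∈ algDerivedSeries mul m, ∀ y : Z, mul u y ∈ W (m + 1) := by
    intro m
    induction m with
    | zero =>
      intro u _ y
      refine Submodule.subset_span ⟨fun _ => y, u, ?_⟩
      simp [List.ofFn_succ]
      rfl
    | succ m ih =>
      intro u hu
      have : ∀ y : Z, mul u y ∈ W (m + 2) := by
        induction hu using Submodule.span_induction with
        | mem z hzm =>
          obtain ⟨x, hx, v, hv, rfl⟩ := hzm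
          intro y
          rw [hB v y x]
          exact (W (m+2)).neg_mem (hprep v (m+1) (mul x y) (ih x hx y))
        | zero => intro y; rw [map_zero, LinearMap.zero_apply]; exact (W (m+2)).zero_mem
        | add x y _ _ hx hy =>
          intro w; rw [map_add, LinearMap.add_apply]; exact (W (m+2)).add_mem (hx w) (hy w)
        | smul c x _ hx =>
          intro w; rw [map_smul, LinearMap.smul_apply]; exact (W (m+2)).smul_mem c (hx w)
      exact this
  -- long words vanish (exterior algebra / alternating map argument)
  set d := Module.finrank ℂ Z with hd
  have hvanish : ∀ c : Fin (d + 1) → Z,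
      ((List.ofFn fun i => R (c i)).prod : Module.End ℂ Z) = 0 := by
    intro c
    set F : ExteriorAlgebra ℂ Z →ₐ[ℂ] Module.End ℂ Z :=
      ExteriorAlgebra.lift ℂ ⟨R, hsq⟩ with hF
    have hdep : ¬ LinearIndependent ℂ c := by
      intro h
      have := h.fintype_card_le_finrank
      simp [hd] at this
    have h0 := (F.toLinearMap.compAlternatingMap
      (ExteriorAlgebra.ιMulti ℂ (d + 1))).map_linearDependent c hdep
    have h1 : F (ExteriorAlgebra.ιMulti ℂ (d + 1) c)
        = ((List.ofFn fun i => R (c i)).prod : Module.End ℂ Z) := by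
      rw [ExteriorAlgebra.ιMulti_apply, map_list_prod]
      congr 1
      rw [List.map_ofFn]
      congr 1
      ext i
      simp [Function.comp, hF]
    rw [LinearMap.compAlternatingMap_apply, AlgHom.toLinearMap_apply, h1] at h0
    exact h0
  -- conclude
  refine ⟨d + 1, le_bot_iff.mp ?_⟩
  have hsub : algDerivedSeries mul (d + 1) ≤ W (d + 1) := by
    rw [show algDerivedSeries mul (d + 1) = Submodule.span ℂ
      {z : Z | ∃ x ∈ algDerivedSeries mul d, ∃ y ∈ algDerivedSeries mul d, z = mul x y} from rfl]
    refine Submodule.span_le.mpr ?_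
    rintro z ⟨x, hx, y, hy, rfl⟩
    exact hS d x hx y
  have hWbot : W (d + 1) ≤ ⊥ := by
    refine Submodule.span_le.mpr ?_
    rintro z ⟨c, w, rfl⟩
    rw [hvanish c]
    simp
  exact hsub.trans hWbot
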